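/- arXiv:2111.04172 — 2 statements merged into one kernel-verified Lean document; each statement's English description precedes it below -/
import Mathlib

section
/- With asymmetric signal precisions p_x^1, p_x^{-1}, p_y^1, p_y^{-1} ∈ [1/2, 1), the quantity F^b − F^u = −2 + (β/(1-β))·((1-p_x^1)/p_x^{-1})·((1-p_y^1)/p_y^{-1} − p_y^1/(1-p_y^{-1})) is increasing in each of p_x^1 and p_x^{-1}, and decreasing in each of p_y^1 and p_y^{-1}. -/
private lemma B_nonpos {py1 pym1 : ℝ} (hy : py1 ∈ Set.Ico (1/2 : ℝ) 1)
    (hym : pym1 ∈ Set.Ico (1/2 : ℝ) 1) :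
    (1 - py1) / pym1 - py1 / (1 - pym1) ≤ 0 := by
  obtain ⟨hy1, hy2⟩ := hy; obtain ⟨hm1, hm2⟩ := hym
  have hp : (0:ℝ) < pym1 := by linarith
  have hq : (0:ℝ) < 1 - pym1 := by linarith
  have h1 : (1 - py1) / pym1 ≤ 1 := (div_le_one hp).2 (by linarith)
  have h2 : (1:ℝ) ≤ py1 / (1 - pym1) := (one_le_div hq).2 (by linarith)
  linarith

/-- With asymmetric precisions in `[1/2, 1)`, `F^b − F^u` is increasing in each of
`pₓ¹, pₓ⁻¹` and decreasing in each of `p_y¹, p_y⁻¹`. -/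
theorem asymmetric_precision_monotone (β : ℝ) (hβ : β ∈ Set.Ioo (0:ℝ) 1) :
    (∀ pxm1 ∈ Set.Ico (1/2 : ℝ) 1, ∀ py1 ∈ Set.Ico (1/2 : ℝ) 1,
      ∀ pym1 ∈ Set.Ico (1/2 : ℝ) 1,
      MonotoneOn
        (fun px1 : ℝ => -2 + (β / (1 - β)) * ((1 - px1) / pxm1) *
          ((1 - py1) / pym1 - py1 / (1 - pym1)))
        (Set.Ico (1/2 : ℝ) 1)) ∧
    (∀ px1 ∈ Set.Ico (1/2 : ℝ) 1, ∀ py1 ∈ Set.Ico (1/2 : ℝ) 1,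
      ∀ pym1 ∈ Set.Ico (1/2 : ℝ) 1,
      MonotoneOn
        (fun pxm1 : ℝ => -2 + (β / (1 - β)) * ((1 - px1) / pxm1) *
          ((1 - py1) / pym1 - py1 / (1 - pym1)))
        (Set.Ico (1/2 : ℝ) 1)) ∧
    (∀ px1 ∈ Set.Ico (1/2 : ℝ) 1, ∀ pxm1 ∈ Set.Ico (1/2 : ℝ) 1,
      ∀ pym1 ∈ Set.Ico (1/2 : ℝ) 1,
      AntitoneOn
        (fun py1 : ℝ => -2 + (β / (1 - β)) * ((1 - px1) / pxm1) *
          ((1 - py1) / pym1 - py1 / (1 - pym1)))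
        (Set.Ico (1/2 : ℝ) 1)) ∧
    (∀ px1 ∈ Set.Ico (1/2 : ℝ) 1, ∀ pxm1 ∈ Set.Ico (1/2 : ℝ) 1,
      ∀ py1 ∈ Set.Ico (1/2 : ℝ) 1,
      AntitoneOn
        (fun pym1 : ℝ => -2 + (β / (1 - β)) * ((1 - px1) / pxm1) *
          ((1 - py1) / pym1 - py1 / (1 - pym1)))
        (Set.Ico (1/2 : ℝ) 1)) := by
  obtain ⟨hβ0, hβ1⟩ := hβ
  have ht : 0 < β / (1 - β) := div_pos hβ0 (by linarith)
  refine ⟨?_, ?_, ?_, ?_⟩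
  · intro pxm1 hxm py1 hy pym1 hym a ha b hb hab
    have hB := B_nonpos hy hym
    have hxm0 : (0:ℝ) < pxm1 := lt_of_lt_of_le (by norm_num) hxm.1
    have hD' : β / (1 - β) * ((1 - b) / pxm1) ≤ β / (1 - β) * ((1 - a) / pxm1) := by
      gcongr
    have key := mul_le_mul_of_nonpos_right hD' hB
    simp only
    linarith
  · intro px1 hx py1 hy pym1 hym a ha b hb hab
    have hB := B_nonpos hy hym
    have ha0 : (0:ℝ) < a := lt_of_lt_of_le (by norm_num) ha.1
    have hx1 : (0:ℝ) ≤ 1 - px1 := by linarith [hx.2]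
    have hD' : β / (1 - β) * ((1 - px1) / b) ≤ β / (1 - β) * ((1 - px1) / a) := by
      gcongr
    have key := mul_le_mul_of_nonpos_right hD' hB
    simp only
    linarith
  · intro px1 hx pxm1 hxm pym1 hym a ha b hb hab
    have hxm0 : (0:ℝ) < pxm1 := lt_of_lt_of_le (by norm_num) hxm.1
    have hK : 0 ≤ β / (1 - β) * ((1 - px1) / pxm1) :=
      mul_nonneg ht.le (div_nonneg (by linarith [hx.2]) hxm0.le)
    have hm0 : (0:ℝ) < pym1 := lt_of_lt_of_le (by norm_num) hym.1
    have hq : (0:ℝ) < 1 - pym1 := by linarith [hym.2]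
    have hBr : (1 - b) / pym1 - b / (1 - pym1) ≤ (1 - a) / pym1 - a / (1 - pym1) := by
      have h1 : (1 - b) / pym1 ≤ (1 - a) / pym1 := by gcongr
      have h2 : a / (1 - pym1) ≤ b / (1 - pym1) := by gcongr
      linarith
    have key := mul_le_mul_of_nonneg_left hBr hK
    simp only
    linarith
  · intro px1 hx pxm1 hxm py1 hy a ha b hb hab
    have hxm0 : (0:ℝ) < pxm1 := lt_of_lt_of_le (by norm_num) hxm.1
    have hK : 0 ≤ β / (1 - β) * ((1 - px1) / pxm1) :=
      mul_nonneg ht.le (div_nonneg (by linarith [hx.2]) hxm0.le)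
    have ha0 : (0:ℝ) < a := lt_of_lt_of_le (by norm_num) ha.1
    have hqb : (0:ℝ) < 1 - b := by linarith [hb.2]
    have hy1 : (0:ℝ) ≤ 1 - py1 := by linarith [hy.2]
    have hy0 : (0:ℝ) ≤ py1 := by linarith [hy.1]
    have hBr : (1 - py1) / b - py1 / (1 - b) ≤ (1 - py1) / a - py1 / (1 - a) := by
      have h1 : (1 - py1) / b ≤ (1 - py1) / a := by gcongr
      have h2 : py1 / (1 - a) ≤ py1 / (1 - b) := by gcongr
      linarith
    have key := mul_le_mul_of_nonneg_left hBr hK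
    simp only
    linarith
end

section
/- Spread order implies higher tail integrals of the payoff: let μ ⪰_sp μ' mean two distributions G, G' on [0,1] satisfy G(a) ≥ G'(a) for a ≤ 1/2 and G(a) ≤ G'(a) for a > 1/2, with equal means. Then for any cutoff c ∈ (0, 1/2], ∫_{c}^{1} (2μ − 1) dG(μ) ≥ ∫_{c}^{1} (2μ − 1) dG'(μ), and for any cutoff c ∈ [1/2, 1), ∫_{c}^{1} (2μ − 1) dG(μ) ≥ ∫_{c}^{1} (2μ − 1) dG'(μ). -/
/-!
Above the cutoff the payoff splits as `(2μ - 1) = (2c - 1) + 2 (μ - c)`, so the tail integral is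
`(2c - 1) G([c, ∞)) + 2 ∫ (μ - c)⁺ dG`. The sign of `2c - 1` is exactly the direction in which the
single crossing at `1/2` compares the masses `G([c, ∞))`. For the call term the crossing gives
the convex order: by the layer cake formula `∫ (μ - c)⁺ dG = ∫_c^∞ (1 - G)`, which settles
`c ≥ 1/2`; for `c < 1/2` put–call parity and the equal means reduce it to
`∫ (c - μ)⁺ dG = ∫_{-∞}^c G`.
-/

open MeasureTheory Set Filter Topology

section

variable {μ : Measure ℝ}

theorem setIntegral_Ici_mul_sub_eq [IsFiniteMeasure μ] (hμ : Integrable id μ) (a b c : ℝ) :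
    ∫ x in Ici c, (a * x - b) ∂μ = (a * c - b) * μ.real (Ici c) + a * ∫ x, max (x - c) 0 ∂μ := by
  have hcall : ∫ x in Ici c, (x - c) ∂μ = ∫ x, max (x - c) 0 ∂μ := by
    rw [← integral_indicator measurableSet_Ici]
    congr 1 with x
    by_cases hx : c ≤ x
    · simp [hx]
    · simp [indicator_of_notMem (show x ∉ Ici c from hx), (not_le.mp hx).le]
  have hint : IntegrableOn (fun x => x - c) (Ici c) μ :=
    (hμ.sub (integrable_const c)).integrableOn
  calc ∫ x in Ici c, (a * x - b) ∂μ = ∫ x in Ici c, ((a * c - b) + a * (x - c)) ∂μ := by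
        congr 1 with x; ring
    _ = _ := by
        rw [integral_add (integrable_const _) (hint.const_mul a), integral_const,
          integral_const_mul, hcall, smul_eq_mul, measureReal_restrict_apply_univ, mul_comm]

theorem integral_max_sub_eq_add_integral_max_const_sub [IsProbabilityMeasure μ]
    (hμ : Integrable id μ) (c : ℝ) :
    ∫ x, max (x - c) 0 ∂μ = ∫ x, x ∂μ - c + ∫ x, max (c - x) 0 ∂μ := by
  have hsplit : (fun x => max (x - c) 0) = fun x => (x - c) + max (c - x) 0 := by
    ext x; rcases le_total c x with h | h <;> simp [h]
  have hlin : Integrable (fun x => x - c) μ := hμ.sub (integrable_const c)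
  have hput : Integrable (fun x => max (c - x) 0) μ := ((integrable_const c).sub hμ).pos_part
  rw [hsplit, integral_add hlin hput, integral_sub (f := fun x => x) hμ (integrable_const c)]
  simp

end

namespace StieltjesFunction

variable {F G : StieltjesFunction ℝ}

theorem lintegral_max_sub_eq (hF : Tendsto F atTop (𝓝 1)) (c : ℝ) :
    ∫⁻ x, ENNReal.ofReal (max (x - c) 0) ∂F.measure =
      ∫⁻ t in Ioi 0, ENNReal.ofReal (1 - F (c + t)) := by
  rw [lintegral_eq_lintegral_meas_lt _ (ae_of_all _ fun x => le_max_right (x - c) 0) (by fun_prop)]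
  refine setLIntegral_congr_fun _root_.measurableSet_Ioi fun t (ht : 0 < t) => ?_
  have hset : {x : ℝ | t < max (x - c) 0} = Ioi (c + t) := by
    ext x
    simp only [mem_ofPred_eq, mem_Ioi, lt_max_iff, ht.not_gt, or_false]
    constructor <;> intro <;> linarith
  rw [hset, F.measure_Ioi hF]

theorem lintegral_max_const_sub_eq (hF : Tendsto F atBot (𝓝 0)) (c : ℝ) :
    ∫⁻ x, ENNReal.ofReal (max (c - x) 0) ∂F.measure =
      ∫⁻ t in Ioi 0, ENNReal.ofReal (F (c - t)) := by
  rw [lintegral_eq_lintegral_meas_le _ (ae_of_all _ fun x => le_max_right (c - x) 0) (by fun_prop)]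
  refine setLIntegral_congr_fun _root_.measurableSet_Ioi fun t (ht : 0 < t) => ?_
  have hset : {x : ℝ | t ≤ max (c - x) 0} = Iic (c - t) := by
    ext x
    simp only [mem_ofPred_eq, mem_Iic, le_max_iff, ht.not_ge, or_false]
    constructor <;> intro <;> linarith
  rw [hset, F.measure_Iic hF, sub_zero]

theorem integral_max_sub_le_of_forall_gt (hF : Tendsto F atTop (𝓝 1))
    (hG : Tendsto G atTop (𝓝 1)) [IsFiniteMeasure G.measure] (hGi : Integrable id G.measure)
    {c : ℝ} (h : ∀ a > c, G a ≤ F a) :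
    ∫ x, max (x - c) 0 ∂F.measure ≤ ∫ x, max (x - c) 0 ∂G.measure := by
  have hle : ∫⁻ x, ENNReal.ofReal (max (x - c) 0) ∂F.measure ≤
      ∫⁻ x, ENNReal.ofReal (max (x - c) 0) ∂G.measure := by
    rw [lintegral_max_sub_eq hF, lintegral_max_sub_eq hG]
    refine setLIntegral_mono
      (measurable_const.sub (G.mono.measurable.comp (measurable_const_add c))).ennreal_ofReal
      fun t (ht : 0 < t) => ?_
    exact ENNReal.ofReal_le_ofReal (by linarith [h (c + t) (by linarith)])
  rw [integral_eq_lintegral_of_nonneg_ae (ae_of_all _ fun x => le_max_right (x - c) 0) (by fun_prop),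
    integral_eq_lintegral_of_nonneg_ae (ae_of_all _ fun x => le_max_right (x - c) 0) (by fun_prop)]
  exact ENNReal.toReal_mono ((hGi.sub (integrable_const c)).pos_part.lintegral_lt_top.ne) hle

theorem integral_max_const_sub_le_of_forall_lt (hF : Tendsto F atBot (𝓝 0))
    (hG : Tendsto G atBot (𝓝 0)) [IsFiniteMeasure G.measure] (hGi : Integrable id G.measure)
    {c : ℝ} (h : ∀ a < c, F a ≤ G a) :
    ∫ x, max (c - x) 0 ∂F.measure ≤ ∫ x, max (c - x) 0 ∂G.measure := by
  have hle : ∫⁻ x, ENNReal.ofReal (max (c - x) 0) ∂F.measure ≤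
      ∫⁻ x, ENNReal.ofReal (max (c - x) 0) ∂G.measure := by
    rw [lintegral_max_const_sub_eq hF, lintegral_max_const_sub_eq hG]
    refine setLIntegral_mono (G.mono.measurable.comp (measurable_const_sub c)).ennreal_ofReal
      fun t (ht : 0 < t) => ?_
    exact ENNReal.ofReal_le_ofReal (h (c - t) (by linarith))
  rw [integral_eq_lintegral_of_nonneg_ae (ae_of_all _ fun x => le_max_right (c - x) 0) (by fun_prop),
    integral_eq_lintegral_of_nonneg_ae (ae_of_all _ fun x => le_max_right (c - x) 0) (by fun_prop)]
  exact ENNReal.toReal_mono (((integrable_const c).sub hGi).pos_part.lintegral_lt_top.ne) hle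

/-- The Karlin–Novikoff cut criterion. -/
theorem integral_max_sub_le_of_single_crossing
    (hF0 : Tendsto F atBot (𝓝 0)) (hF1 : Tendsto F atTop (𝓝 1))
    (hG0 : Tendsto G atBot (𝓝 0)) (hG1 : Tendsto G atTop (𝓝 1))
    (hFi : Integrable id F.measure) (hGi : Integrable id G.measure)
    (hmean : ∫ x, x ∂F.measure = ∫ x, x ∂G.measure) {m : ℝ}
    (hle : ∀ a ≤ m, F a ≤ G a) (hge : ∀ a > m, G a ≤ F a) (c : ℝ) :
    ∫ x, max (x - c) 0 ∂F.measure ≤ ∫ x, max (x - c) 0 ∂G.measure := by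
  have := F.isProbabilityMeasure hF0 hF1
  have := G.isProbabilityMeasure hG0 hG1
  rcases le_or_gt m c with hc | hc
  · exact integral_max_sub_le_of_forall_gt hF1 hG1 hGi fun a ha => hge a (hc.trans_lt ha)
  · rw [integral_max_sub_eq_add_integral_max_const_sub hFi,
      integral_max_sub_eq_add_integral_max_const_sub hGi, hmean]
    exact add_le_add_right
      (integral_max_const_sub_le_of_forall_lt hF0 hG0 hGi fun a ha => hle a (ha.trans hc).le) _

theorem measureReal_Ici_le_of_eventually_le [IsFiniteMeasure F.measure]
    (hF : Tendsto F atTop (𝓝 1)) (hG : Tendsto G atTop (𝓝 1)) {c : ℝ}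
    (h : ∀ᶠ a in 𝓝[<] c, F a ≤ G a) : G.measure.real (Ici c) ≤ F.measure.real (Ici c) := by
  refine ENNReal.toReal_mono (measure_ne_top _ _) ?_
  rw [F.measure_Ici hF, G.measure_Ici hG]
  exact ENNReal.ofReal_le_ofReal (sub_le_sub_left
    (le_of_tendsto_of_tendsto (F.mono.tendsto_leftLim c) (G.mono.tendsto_leftLim c) h) 1)

theorem mul_measureReal_Ici_le_of_single_crossing [IsFiniteMeasure F.measure]
    [IsFiniteMeasure G.measure] (hF : Tendsto F atTop (𝓝 1)) (hG : Tendsto G atTop (𝓝 1))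
    {m : ℝ} (hle : ∀ a ≤ m, F a ≤ G a) (hge : ∀ a > m, G a ≤ F a) (c : ℝ) :
    (c - m) * F.measure.real (Ici c) ≤ (c - m) * G.measure.real (Ici c) := by
  rcases le_or_gt c m with hc | hc
  · refine mul_le_mul_of_nonpos_left (measureReal_Ici_le_of_eventually_le hF hG ?_) (by linarith)
    exact eventually_nhdsWithin_of_forall fun a (ha : a < c) => hle a (ha.le.trans hc)
  · refine mul_le_mul_of_nonneg_left (measureReal_Ici_le_of_eventually_le hG hF ?_) (by linarith)
    filter_upwards [Ioo_mem_nhdsLT hc] with a ha using hge a ha.1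

theorem tendsto_atBot_of_forall_lt {l : ℝ} (h : ∀ a < l, F a = 0) : Tendsto F atBot (𝓝 0) :=
  tendsto_const_nhds.congr' <| (eventually_lt_atBot l).mono fun a ha => (h a ha).symm

theorem tendsto_atTop_of_forall_ge {u : ℝ} (h : ∀ a ≥ u, F a = 1) : Tendsto F atTop (𝓝 1) :=
  tendsto_const_nhds.congr' <| (eventually_ge_atTop u).mono fun a ha => (h a ha).symm

theorem ae_mem_Icc_of_forall {l u : ℝ} (h0 : ∀ a < l, F a = 0) (h1 : ∀ a ≥ u, F a = 1) :
    ∀ᵐ x ∂F.measure, x ∈ Icc l u := by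
  have := F.isProbabilityMeasure (tendsto_atBot_of_forall_lt h0) (tendsto_atTop_of_forall_ge h1)
  have hleft : Function.leftLim F l = 0 :=
    leftLim_eq_of_tendsto <| tendsto_const_nhds.congr' <|
      eventually_nhdsWithin_of_forall fun a ha => (h0 a ha).symm
  change F.measure (Icc l u)ᶜ = 0
  rw [prob_compl_eq_zero_iff measurableSet_Icc, F.measure_Icc, hleft, h1 u le_rfl]
  simp

theorem integrable_id_of_forall {l u : ℝ} (h0 : ∀ a < l, F a = 0) (h1 : ∀ a ≥ u, F a = 1) :
    Integrable id F.measure :=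
  have := F.isProbabilityMeasure (tendsto_atBot_of_forall_lt h0) (tendsto_atTop_of_forall_ge h1)
  .of_mem_Icc l u aemeasurable_id (ae_mem_Icc_of_forall h0 h1)

end StieltjesFunction

open StieltjesFunction in
/-- If the posterior distribution `G` is more spread out around `1/2` than `G'`
(single crossing of CDFs at `1/2`), both are supported on `[0,1]` with equal means,
then for every cutoff `c ∈ (0,1)` the tail integral of the payoff `2μ − 1` is
weakly larger under `G` than under `G'`. -/
theorem spread_order_tail_integral (G G' : StieltjesFunction ℝ)
    (hG0 : ∀ a < (0:ℝ), G a = 0) (hG1 : ∀ a ≥ (1:ℝ), G a = 1)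
    (hG'0 : ∀ a < (0:ℝ), G' a = 0) (hG'1 : ∀ a ≥ (1:ℝ), G' a = 1)
    (hsp₁ : ∀ a ≤ (1/2 : ℝ), G a ≥ G' a)
    (hsp₂ : ∀ a > (1/2 : ℝ), G a ≤ G' a)
    (hmean : ∫ μ, μ ∂G.measure = ∫ μ, μ ∂G'.measure) :
    ∀ c ∈ Set.Ioo (0:ℝ) 1,
      ∫ μ in Set.Ici c, (2 * μ - 1) ∂G.measure ≥
        ∫ μ in Set.Ici c, (2 * μ - 1) ∂G'.measure := by
  intro c _
  have hbot := tendsto_atBot_of_forall_lt hG0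
  have htop := tendsto_atTop_of_forall_ge hG1
  have hbot' := tendsto_atBot_of_forall_lt hG'0
  have htop' := tendsto_atTop_of_forall_ge hG'1
  have := G.isProbabilityMeasure hbot htop
  have := G'.isProbabilityMeasure hbot' htop'
  have hint := integrable_id_of_forall hG0 hG1
  have hint' := integrable_id_of_forall hG'0 hG'1
  have hcall := integral_max_sub_le_of_single_crossing hbot' htop' hbot htop hint' hint
    hmean.symm hsp₁ hsp₂ c
  have hmass := mul_measureReal_Ici_le_of_single_crossing htop' htop hsp₁ hsp₂ c
  rw [ge_iff_le, setIntegral_Ici_mul_sub_eq hint', setIntegral_Ici_mul_sub_eq hint]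
  linarith
end
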